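/- arXiv:2301.06700 — 8 statements merged into one kernel-verified Lean document; each statement's English description precedes it below -/
import Mathlib

section
/- Let V be a 3-dimensional real vector space equipped with a nondegenerate symmetric bilinear form ⟨·,·⟩, and let C be a nonzero trilinear form on V satisfying (i) C(X,Y,Z) = -C(Y,X,Z), (ii) C(X,Y,Z) + C(Y,Z,X) + C(Z,X,Y) = 0, and (iii) the ⟨·,·⟩-trace of (X,Z) ↦ C(X,Y,Z) vanishes for every Y. Then every vector u ∈ V with C(u,·,·) = 0 is null, i.e., ⟨u,u⟩ = 0. -/
/-!
If `u` were not null, it would extend to a `B`-orthogonal basis `u, e₁, e₂` of non-null vectors.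
In such a basis the trace condition for `Y` reads `∑ᵢ C(eᵢ, Y, eᵢ) / B(eᵢ, eᵢ) = 0`. By
antisymmetry and the cyclic identity `C` vanishes as soon as `u` occupies any slot, and
`C(X, X, ·) = 0`; so `Y = e₁` and `Y = e₂` force `C(e₂, e₁, e₂) = C(e₁, e₂, e₁) = 0`, and these
determine all remaining components of `C`. Hence `C = 0`.
-/

open Module

namespace LinearMap

variable {K V : Type*} [Field K] [AddCommGroup V] [Module K V]

theorem trace_eq_sum_div_of_isOrthoᵢ {ι : Type*} [Fintype ι] [DecidableEq ι]
    {B : V →ₗ[K] V →ₗ[K] K} {v : Basis ι K V} (hv : B.IsOrthoᵢ v)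
    (hvv : ∀ i, B (v i) (v i) ≠ 0) (T : V →ₗ[K] V) :
    trace K V T = ∑ i, B (T (v i)) (v i) / B (v i) (v i) := by
  rw [trace_eq_matrix_trace K v, Matrix.trace]
  refine Finset.sum_congr rfl fun i _ => ?_
  have hTi : B (T (v i)) (v i) = v.repr (T (v i)) i * B (v i) (v i) := by
    conv_lhs => rw [← v.sum_repr (T (v i))]
    rw [map_sum, sum_apply, Finset.sum_eq_single i]
    · simp
    · intro j _ hji
      simp [hv hji]
    · simp
  rw [hTi, mul_div_cancel_right₀ _ (hvv i), Matrix.diag_apply, toMatrix_apply]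

theorem exists_forall_apply_eq [FiniteDimensional K V] {B : V →ₗ[K] V →ₗ[K] K}
    (hB : B.SeparatingLeft) (f : V →ₗ[K] V →ₗ[K] K) :
    ∃ T : V →ₗ[K] V, ∀ X Z, B (T X) Z = f X Z := by
  have hB' : BilinForm.Nondegenerate B := .ofSeparatingLeft hB
  refine ⟨(BilinForm.toDual B hB').symm.toLinearMap ∘ₗ f, fun X Z => ?_⟩
  rw [← BilinForm.toDual_def hB', coe_comp, LinearEquiv.coe_coe, Function.comp_apply,
    LinearEquiv.apply_symm_apply]

theorem exists_isOrthoᵢ_basis_fin_cons [Invertible (2 : K)] [FiniteDimensional K V]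
    {B : V →ₗ[K] V →ₗ[K] K} (hsymm : B.IsSymm) (hsep : B.SeparatingLeft) {u : V}
    (hu : B u u ≠ 0) {n : ℕ} (hn : finrank K V = n + 1) :
    ∃ v : Basis (Fin (n + 1)) K V, v 0 = u ∧ B.IsOrthoᵢ v ∧ ∀ i, B (v i) (v i) ≠ 0 := by
  let W := (K ∙ u).orthogonalBilin B
  have hW : finrank K W = n := by
    have := (Submodule.finrank_add_eq_of_isCompl (isCompl_span_singleton_orthogonal hu)).trans hn
    rw [finrank_span_singleton (ne_zero_of_map hu), add_comm n] at this
    exact Nat.add_left_cancel this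
  obtain ⟨w, hw⟩ := BilinForm.exists_orthogonal_basis (hsymm.domRestrict W)
  have hww := hw.not_isOrtho_basis_self_of_separatingLeft
    (BilinForm.restrict_nondegenerate_orthogonal_spanSingleton B
      (hsymm.isRefl.nondegenerate_iff_separatingLeft.mpr hsep) hsymm.isRefl hu).1
  have huW : ∀ x ∈ W, B u x = 0 := fun x hx => hx u (Submodule.mem_span_singleton_self u)
  let e : Fin (n + 1) → V := Fin.cons u fun i => w (Fin.cast hW.symm i)
  have he : B.IsOrthoᵢ e := by
    intro i j hij
    induction i using Fin.cases <;> induction j using Fin.cases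
    · exact absurd rfl hij
    · exact huW _ (w _).2
    · exact hsymm.eq_iff.mp (huW _ (w _).2)
    · exact hw (by simpa using hij)
  have hee : ∀ i, B (e i) (e i) ≠ 0 := fun i => Fin.cases hu (fun i => hww _) i
  refine ⟨basisOfLinearIndependentOfCardEqFinrank (linearIndependent_of_isOrthoᵢ he hee)
    (by simp [hn]), ?_⟩
  simp_rw [coe_basisOfLinearIndependentOfCardEqFinrank]
  exact ⟨rfl, he, hee⟩

end LinearMap

theorem cottonLike_eq_zero_of_basis_zero_mem_kernel {K V : Type*} [Field K] [NeZero (2 : K)]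
    [AddCommGroup V] [Module K V] (C : V →ₗ[K] V →ₗ[K] V →ₗ[K] K) (v : Basis (Fin 3) K V)
    {d : Fin 3 → K} (hd : ∀ i, d i ≠ 0)
    (hanti : ∀ X Y Z, C X Y Z = -C Y X Z) (hcyc : ∀ X Y Z, C X Y Z + C Y Z X + C Z X Y = 0)
    (hker : ∀ Y Z, C (v 0) Y Z = 0) (htrace : ∀ Y, ∑ i, C (v i) Y (v i) / d i = 0) :
    C = 0 := by
  have hself (X Z : V) : C X X Z = 0 := by
    have : (2 : K) * C X X Z = 0 := by linear_combination hanti X X Z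
    exact (mul_eq_zero.mp this).resolve_left two_ne_zero
  have hmid (X Z : V) : C X (v 0) Z = 0 := by rw [hanti, hker, neg_zero]
  have hlast (X Y : V) : C X Y (v 0) = 0 := by
    linear_combination hcyc X Y (v 0) - hmid Y X - hker X Y
  have h212 : C (v 2) (v 1) (v 2) = 0 := by
    have h := htrace (v 1)
    rw [Fin.sum_univ_three, hker, hself, zero_div, zero_div, zero_add, zero_add,
      div_eq_zero_iff] at h
    exact h.resolve_right (hd 2)
  have h121 : C (v 1) (v 2) (v 1) = 0 := by
    have h := htrace (v 2)
    rw [Fin.sum_univ_three, hker, hself, zero_div, zero_div, zero_add, add_zero,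
      div_eq_zero_iff] at h
    exact h.resolve_right (hd 1)
  refine v.ext fun i => v.ext fun j => v.ext fun k => ?_
  fin_cases i <;> fin_cases j <;> fin_cases k <;>
    simp [hker, hmid, hlast, hself, h212, h121, hanti (v 1) (v 2), hanti (v 2) (v 1)]

/-- Every kernel vector of a nonzero Cotton-like tensor on a 3-dimensional
pseudo-Euclidean space is null. -/
theorem stmt0 {V : Type*} [AddCommGroup V] [Module ℝ V] [FiniteDimensional ℝ V]
    (hdim : Module.finrank ℝ V = 3)
    (B : V →ₗ[ℝ] V →ₗ[ℝ] ℝ)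
    (hBsymm : ∀ x y : V, B x y = B y x)
    (hBnondeg : ∀ x : V, (∀ y : V, B x y = 0) → x = 0)
    (C : V →ₗ[ℝ] V →ₗ[ℝ] V →ₗ[ℝ] ℝ)
    (hCne : C ≠ 0)
    (hCanti : ∀ X Y Z : V, C X Y Z = - C Y X Z)
    (hCcyc : ∀ X Y Z : V, C X Y Z + C Y Z X + C Z X Y = 0)
    (hCtrace : ∀ (Y : V) (T : V →ₗ[ℝ] V),
      (∀ X Z : V, B (T X) Z = C X Y Z) → LinearMap.trace ℝ V T = 0)
    (u : V) (hu : ∀ Y Z : V, C u Y Z = 0) :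
    B u u = 0 := by
  by_contra huu
  obtain ⟨v, rfl, hvo, hvv⟩ :=
    LinearMap.exists_isOrthoᵢ_basis_fin_cons (LinearMap.isSymm_def.mpr hBsymm) hBnondeg huu hdim
  refine hCne (cottonLike_eq_zero_of_basis_zero_mem_kernel C v hvv hCanti hCcyc hu fun Y => ?_)
  obtain ⟨T, hT⟩ := LinearMap.exists_forall_apply_eq hBnondeg (C.flip Y)
  rw [← hCtrace Y T hT, LinearMap.trace_eq_sum_div_of_isOrthoᵢ hvo hvv]
  simp [hT]
end

section
/- Let V be a 3-dimensional real vector space with a nondegenerate symmetric bilinear form ⟨·,·⟩, and let C be a nonzero Cotton-like tensor on V whose kernel D = {u : C(u,·,·)=0} has dimension 1. Then there exist a nonzero vector u ∈ D and a vector v with ⟨v,v⟩ = ±1 and ⟨u,v⟩ = 0 such that, identifying V with V* via ⟨·,·⟩, C = (u ∧ v) ⊗ u; explicitly, C(X,Y,Z) = (⟨u,X⟩⟨v,Y⟩ − ⟨v,X⟩⟨u,Y⟩)⟨u,Z⟩ for all X,Y,Z ∈ V. -/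
/-!
Let `u` span the kernel and extend it to a basis `(u, x, y)`. Since `C` is alternating in its first
two slots and vanishes whenever one of them is `u`, `C(X, Y, ·) = ω(X, Y) C(x, y, ·)` for the
coordinate 2-form `ω` with `ω(u, ·) = 0` and `ω(x, y) = 1`. Write `C(x, y, ·) = ⟨a, ·⟩`; then the
endomorphism `X ↦ C(X, Y, ·)^♯ = ω(X, Y) a` has trace `ω(a, Y)`, so trace-freeness forces
`a ∈ ℝu` and `C = c ω ⊗ ⟨u, ·⟩` with `c ≠ 0`. The cyclic identity gives `C(x, y, u) = 0`, so `u`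
is null. In dimension three `u^⊥` is not totally isotropic and contains a unit vector `v`; the
2-form `⟨u, ·⟩ ∧ ⟨v, ·⟩` also vanishes on `u`, hence is a nonzero multiple of `ω`, and rescaling
`u` and the sign of `v` absorbs the remaining constant.
-/

open Module

section Wedge

variable {R V M : Type*} [CommRing R] [AddCommGroup V] [Module R V] [AddCommGroup M] [Module R M]

def LinearMap.wedge (f g : Dual R V) : V →ₗ[R] V →ₗ[R] R := f.smulRight g - g.smulRight f

@[simp]
lemma LinearMap.wedge_apply (f g : Dual R V) (X Y : V) :
    f.wedge g X Y = f X * g Y - g X * f Y := by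
  simp [LinearMap.wedge]

lemma LinearMap.apply_eq_wedge_coord_smul (b : Basis (Fin 3) R V) (F : V →ₗ[R] V →ₗ[R] M)
    (hF : ∀ X, F X X = 0) (h0 : F (b 0) = 0) (X Y : V) :
    F X Y = (b.coord 1).wedge (b.coord 2) X Y • F (b 1) (b 2) := by
  have hanti : ∀ X Y, F Y X = - F X Y := fun X Y => by
    have := hF (X + Y)
    simp only [map_add, LinearMap.add_apply, hF, zero_add, add_zero] at this
    exact eq_neg_of_add_eq_zero_left this
  have h0' : ∀ X, F X (b 0) = 0 := fun X => by rw [hanti, h0, LinearMap.zero_apply, neg_zero]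
  conv_lhs => rw [← b.sum_repr X, ← b.sum_repr Y]
  simp only [Fin.sum_univ_three, map_add, map_smul, LinearMap.add_apply, LinearMap.smul_apply,
    h0, h0', hF, hanti (b 1) (b 2), smul_zero, smul_neg, zero_add, add_zero,
    LinearMap.wedge_apply, Basis.coord_apply]
  module

end Wedge

section TraceFree

variable {R V : Type*} [CommRing R] [AddCommGroup V] [Module R V]

def IsTraceFree (B : V →ₗ[R] V →ₗ[R] R) (C : V →ₗ[R] V →ₗ[R] V →ₗ[R] R) : Prop :=
  ∀ (Y : V) (T : V →ₗ[R] V), (∀ X Z : V, B (T X) Z = C X Y Z) → LinearMap.trace R V T = 0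

lemma IsTraceFree.apply_eq_zero_of_eq_mul [Module.Free R V] [Module.Finite R V]
    {B : V →ₗ[R] V →ₗ[R] R} {C : V →ₗ[R] V →ₗ[R] V →ₗ[R] R} (hC : IsTraceFree B C)
    (ω : V →ₗ[R] V →ₗ[R] R) (a : V) (h : ∀ X Y Z, C X Y Z = ω X Y * B a Z) (Y : V) :
    ω a Y = 0 := by
  simpa using hC Y ((ω.flip Y).smulRight a) fun X Z => by simp [h]

end TraceFree

section Field

variable {K V : Type*} [Field K] [AddCommGroup V] [Module K V]

lemma exists_wedge_eq_mul_wedge_coord {B : LinearMap.BilinForm K V} (hB : B.SeparatingLeft)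
    (hBsymm : ∀ x y, B x y = B y x) (b : Basis (Fin 3) K V) (hnull : B (b 0) (b 0) = 0) {v : V}
    (huv : B (b 0) v = 0) (hvv : B v v ≠ 0) :
    ∃ μ ≠ 0, ∀ X Y, (B (b 0)).wedge (B v) X Y = μ * (b.coord 1).wedge (b.coord 2) X Y := by
  set F := (B (b 0)).wedge (B v)
  have hF : ∀ X Y, F X Y = (b.coord 1).wedge (b.coord 2) X Y * F (b 1) (b 2) :=
    F.apply_eq_wedge_coord_smul b (fun X => by simp [F, mul_comm])
      (by ext Y; simp [F, hnull, hBsymm v, huv])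
  refine ⟨F (b 1) (b 2), fun hμ => ?_, fun X Y => by rw [hF, mul_comm]⟩
  obtain ⟨X, hX⟩ : ∃ X, B (b 0) X ≠ 0 := by
    by_contra! h
    exact b.ne_zero 0 (hB _ h)
  have := hF X v
  simp [F, hμ, huv, hX, hvv] at this

variable [FiniteDimensional K V]

lemma exists_basis_zero_eq {n : ℕ} (hn : finrank K V = n + 1) {u : V} (hu : u ≠ 0) :
    ∃ b : Basis (Fin (n + 1)) K V, b 0 = u := by
  obtain ⟨N, hN⟩ := Submodule.exists_isCompl (K ∙ u)
  have hNdim : finrank K N = n := by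
    have := Submodule.finrank_add_eq_of_isCompl hN
    rw [finrank_span_singleton hu, hn] at this
    omega
  refine ⟨Basis.mkFinCons u (finBasisOfFinrankEq K N hNdim) (fun c x hx hcx => ?_) (fun z => ?_),
    by simp [Basis.coe_mkFinCons]⟩
  · have hcu : c • u ∈ (K ∙ u) ⊓ N :=
      ⟨Submodule.smul_mem _ c (Submodule.mem_span_singleton_self u),
        eq_neg_of_add_eq_zero_left hcx ▸ N.neg_mem hx⟩
    rw [hN.inf_eq_bot, Submodule.mem_bot, smul_eq_zero] at hcu
    exact hcu.resolve_right hu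
  · obtain ⟨y, hy, x, hx, rfl⟩ :=
      Submodule.mem_sup.mp (hN.sup_eq_top ▸ Submodule.mem_top (x := z))
    obtain ⟨a, rfl⟩ := Submodule.mem_span_singleton.mp hy
    exact ⟨-a, by simpa using hx⟩

lemma exists_orthogonal_not_isotropic [NeZero (2 : K)] {B : LinearMap.BilinForm K V}
    (hB : B.Nondegenerate) (hBsymm : ∀ x y, B x y = B y x) (hV : 3 ≤ finrank K V) (u : V) :
    ∃ v, B u v = 0 ∧ B v v ≠ 0 := by
  by_contra! h
  have hW : finrank K V ≤ finrank K (LinearMap.ker (B u)) + 1 := by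
    have := (B u).finrank_range_add_finrank_ker
    have := Submodule.finrank_le (LinearMap.range (B u))
    rw [finrank_self] at this
    omega
  have hiso : LinearMap.ker (B u) ≤ B.orthogonal (LinearMap.ker (B u)) :=
    fun y hy => B.mem_orthogonal_iff.mpr fun x hx => by
      have hxy := h (x + y) (add_mem hx hy)
      simp only [map_add, LinearMap.add_apply, h x hx, h y hy, hBsymm y x] at hxy
      have : (2 : K) * B x y = 0 := by linear_combination hxy
      exact (mul_eq_zero.mp this).resolve_left two_ne_zero
  have := Submodule.finrank_mono hiso
  rw [LinearMap.BilinForm.finrank_orthogonal hB] at this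
  omega

lemma exists_eq_mul_wedge_coord_of_isTraceFree [NeZero (2 : K)] {B : LinearMap.BilinForm K V}
    (hB : B.Nondegenerate) {C : V →ₗ[K] V →ₗ[K] V →ₗ[K] K} (hC : IsTraceFree B C)
    (hCanti : ∀ X Y Z, C X Y Z = -C Y X Z) (b : Basis (Fin 3) K V) (hker : C (b 0) = 0) :
    ∃ c : K, ∀ X Y Z, C X Y Z = c * ((b.coord 1).wedge (b.coord 2) X Y * B (b 0) Z) := by
  set ω := (b.coord 1).wedge (b.coord 2)
  set a := (B.toDual hB).symm (C (b 1) (b 2))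
  have hCself : ∀ X, C X X = 0 := fun X => by
    ext Z
    have := hCanti X X Z
    have : (2 : K) * C X X Z = 0 := by linear_combination this
    exact (mul_eq_zero.mp this).resolve_left two_ne_zero
  have hform : ∀ X Y Z, C X Y Z = ω X Y * B a Z := fun X Y Z => by
    rw [C.apply_eq_wedge_coord_smul b hCself hker X Y]
    simp [a, ω]
  have hωa := hC.apply_eq_zero_of_eq_mul ω a hform
  have ha1 : b.repr a 1 = 0 := by simpa [ω] using hωa (b 2)
  have ha2 : b.repr a 2 = 0 := by simpa [ω] using hωa (b 1)
  obtain ⟨c, ha⟩ : ∃ c : K, a = c • b 0 := by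
    have ha := b.sum_repr a
    rw [Fin.sum_univ_three, ha1, ha2, zero_smul, zero_smul, add_zero, add_zero] at ha
    exact ⟨_, ha.symm⟩
  refine ⟨c, fun X Y Z => ?_⟩
  rw [hform, ha, map_smul, LinearMap.smul_apply, smul_eq_mul]
  ring

end Field

lemma Real.exists_eq_sign_mul_sq {r : ℝ} (hr : r ≠ 0) :
    ∃ t ≠ 0, ∃ ε : ℝ, (ε = 1 ∨ ε = -1) ∧ r = ε * t ^ 2 := by
  rcases hr.lt_or_gt with hr | hr
  · refine ⟨√(-r), Real.sqrt_ne_zero'.mpr (by linarith), -1, .inr rfl, ?_⟩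
    rw [Real.sq_sqrt (by linarith)]
    ring
  · exact ⟨√r, Real.sqrt_ne_zero'.mpr hr, 1, .inl rfl, by rw [Real.sq_sqrt hr.le]; ring⟩

lemma exists_orthogonal_unit {V : Type*} [AddCommGroup V] [Module ℝ V] [FiniteDimensional ℝ V]
    {B : LinearMap.BilinForm ℝ V} (hB : B.Nondegenerate) (hBsymm : ∀ x y, B x y = B y x)
    (hV : 3 ≤ finrank ℝ V) (u : V) : ∃ v, B u v = 0 ∧ (B v v = 1 ∨ B v v = -1) := by
  obtain ⟨v, huv, hvv⟩ := exists_orthogonal_not_isotropic hB hBsymm hV u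
  obtain ⟨t, ht, ε, hε, hvvε⟩ := Real.exists_eq_sign_mul_sq hvv
  refine ⟨t⁻¹ • v, by simp [huv], ?_⟩
  have : B (t⁻¹ • v) (t⁻¹ • v) = ε := by
    simp only [map_smul, LinearMap.smul_apply, smul_eq_mul, hvvε]
    field_simp
  rwa [this]

/-- A nonzero Cotton-like tensor on a 3-dimensional pseudo-Euclidean space whose
kernel is 1-dimensional has the form `(u ∧ v) ⊗ u` with `u` a nonzero kernel
vector and `v` unit and orthogonal to `u`. -/
theorem stmt1 {V : Type*} [AddCommGroup V] [Module ℝ V] [FiniteDimensional ℝ V]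
    (hdim : Module.finrank ℝ V = 3)
    (B : V →ₗ[ℝ] V →ₗ[ℝ] ℝ)
    (hBsymm : ∀ x y : V, B x y = B y x)
    (hBnondeg : ∀ x : V, (∀ y : V, B x y = 0) → x = 0)
    (C : V →ₗ[ℝ] V →ₗ[ℝ] V →ₗ[ℝ] ℝ)
    (hCne : C ≠ 0)
    (hCanti : ∀ X Y Z : V, C X Y Z = - C Y X Z)
    (hCcyc : ∀ X Y Z : V, C X Y Z + C Y Z X + C Z X Y = 0)
    (hCtrace : ∀ (Y : V) (T : V →ₗ[ℝ] V),
      (∀ X Z : V, B (T X) Z = C X Y Z) → LinearMap.trace ℝ V T = 0)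
    -- the kernel D = {u : C(u,·,·) = 0} is one-dimensional:
    (hD : ∃ u₀ : V, u₀ ≠ 0 ∧ (∀ Y Z : V, C u₀ Y Z = 0) ∧
      ∀ w : V, (∀ Y Z : V, C w Y Z = 0) → ∃ c : ℝ, w = c • u₀) :
    ∃ u v : V, u ≠ 0 ∧ (∀ Y Z : V, C u Y Z = 0) ∧
      (B v v = 1 ∨ B v v = -1) ∧ B u v = 0 ∧
      ∀ X Y Z : V, C X Y Z = (B u X * B v Y - B v X * B u Y) * B u Z := by
  obtain ⟨u, hu, hker, -⟩ := hD
  have hB : B.Nondegenerate :=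
    (LinearMap.IsRefl.nondegenerate_iff_separatingLeft fun x y h => hBsymm x y ▸ h).mpr hBnondeg
  obtain ⟨b, rfl⟩ := exists_basis_zero_eq (n := 2) hdim hu
  obtain ⟨c, hc⟩ := exists_eq_mul_wedge_coord_of_isTraceFree hB hCtrace hCanti b
    (by ext Y Z; exact hker Y Z)
  have hc0 : c ≠ 0 := by
    rintro rfl
    exact hCne (by ext X Y Z; simp [hc])
  have hnull : B (b 0) (b 0) = 0 := by
    have := hCcyc (b 1) (b 2) (b 0)
    rw [hCanti (b 2), hker, hker, hc] at this
    simpa [hc0] using this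
  obtain ⟨v, huv, hvv⟩ := exists_orthogonal_unit hB hBsymm hdim.ge (b 0)
  obtain ⟨μ, hμ, hω⟩ := exists_wedge_eq_mul_wedge_coord hBnondeg hBsymm b hnull huv
    (by rcases hvv with h | h <;> simp [h])
  obtain ⟨t, ht, ε, hε, hcμ⟩ := Real.exists_eq_sign_mul_sq (div_ne_zero hc0 hμ)
  refine ⟨t • b 0, ε • v, smul_ne_zero ht hu, fun Y Z => by simp [hker], ?_, by simp [huv],
    fun X Y Z => ?_⟩
  · rcases hε with rfl | rfl <;> simpa using hvv
  · have hω' := hω X Y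
    rw [LinearMap.wedge_apply] at hω'
    rw [hc, (div_eq_iff hμ).mp hcμ]
    simp only [map_smul, LinearMap.smul_apply, smul_eq_mul]
    linear_combination (-(ε * t ^ 2) * B (b 0) Z) * hω'
end

section
/- Let V be a 3-dimensional real vector space with a nondegenerate symmetric bilinear form ⟨·,·⟩, let u ∈ V be a nonzero null vector and v ∈ V satisfy ⟨v,v⟩ = ±1 and ⟨u,v⟩ = 0. Then the trilinear form C(X,Y,Z) = (⟨u,X⟩⟨v,Y⟩ − ⟨v,X⟩⟨u,Y⟩)⟨u,Z⟩ is a Cotton-like tensor on V (antisymmetric in the first two arguments, cyclically vanishing, and trace-free in the first and third arguments), and its kernel {w ∈ V : C(w,·,·)=0} equals the line ℝu. -/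
/-- The trilinear form `(u ∧ v) ⊗ u`. -/
def wedgeTensor {V : Type*} [AddCommGroup V] [Module ℝ V]
    (B : V →ₗ[ℝ] V →ₗ[ℝ] ℝ) (u v : V) : V → V → V → ℝ :=
  fun X Y Z => (B u X * B v Y - B v X * B u Y) * B u Z

/-- For `u` null nonzero and `v` unit orthogonal to `u`, the trilinear form
`(u ∧ v) ⊗ u` is Cotton-like, with kernel exactly the line `ℝu`. -/
theorem stmt2 {V : Type*} [AddCommGroup V] [Module ℝ V] [FiniteDimensional ℝ V]
    (hdim : Module.finrank ℝ V = 3)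
    (B : V →ₗ[ℝ] V →ₗ[ℝ] ℝ)
    (hBsymm : ∀ x y : V, B x y = B y x)
    (hBnondeg : ∀ x : V, (∀ y : V, B x y = 0) → x = 0)
    (u v : V) (hu : u ≠ 0) (hnull : B u u = 0)
    (hv : B v v = 1 ∨ B v v = -1) (huv : B u v = 0) :
    (∀ X Y Z : V, wedgeTensor B u v X Y Z = - wedgeTensor B u v Y X Z) ∧
    (∀ X Y Z : V, wedgeTensor B u v X Y Z + wedgeTensor B u v Y Z X
      + wedgeTensor B u v Z X Y = 0) ∧
    (∀ (Y : V) (T : V →ₗ[ℝ] V),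
      (∀ X Z : V, B (T X) Z = wedgeTensor B u v X Y Z) →
        LinearMap.trace ℝ V T = 0) ∧
    (∀ w : V, (∀ Y Z : V, wedgeTensor B u v w Y Z = 0) ↔ ∃ c : ℝ, w = c • u) := by
  have hvu : B v u = 0 := by rw [hBsymm]; exact huv
  have hvv : B v v ≠ 0 := by rcases hv with h | h <;> rw [h] <;> norm_num
  -- a vector z with B u z = 1
  obtain ⟨y, hy⟩ : ∃ y, B u y ≠ 0 := by
    by_contra h
    push_neg at h
    exact hu (hBnondeg u h)
  set z : V := (B u y)⁻¹ • y with hz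
  have huz : B u z = 1 := by
    simp [hz, map_smul, smul_eq_mul, inv_mul_cancel₀ hy]
  refine ⟨?_, ?_, ?_, ?_⟩
  · intro X Y Z; simp only [wedgeTensor]; ring
  · intro X Y Z; simp only [wedgeTensor]; ring
  · intro Y T hT
    set g : V →ₗ[ℝ] ℝ := (B v Y) • (B u) - (B u Y) • (B v) with hg
    have hTg : T = dualTensorHom ℝ V V (g ⊗ₜ[ℝ] u) := by
      ext X
      rw [dualTensorHom_apply]
      have : ∀ Z, B (T X - g X • u) Z = 0 := by
        intro Z
        simp only [map_sub, map_smul, LinearMap.sub_apply, LinearMap.smul_apply,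
          smul_eq_mul, hT X Z, wedgeTensor, hg]
        ring
      exact sub_eq_zero.mp (hBnondeg _ this)
    rw [hTg, LinearMap.trace_eq_contract_apply, contractLeft_apply]
    simp [hg, hnull, hvu]
  · intro w
    constructor
    · intro hw
      have h1 : ∀ Y, B u w * B v Y - B v w * B u Y = 0 := by
        intro Y
        have := hw Y z
        rw [wedgeTensor, huz, mul_one] at this
        exact this
      have huw : B u w = 0 := by
        have := h1 v
        rw [huv, mul_zero, sub_zero] at this
        exact (mul_eq_zero.mp this).resolve_right hvv
      have hvw : B v w = 0 := by
        have := h1 z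
        rw [huw, zero_mul, huz, mul_one, zero_sub, neg_eq_zero] at this
        exact this
      -- basis u, v, z
      have hli : LinearIndependent ℝ ![u, v, z] := by
        rw [Fintype.linearIndependent_iff]
        intro c hc
        rw [Fin.sum_univ_three] at hc
        simp only [Matrix.cons_val_zero, Matrix.cons_val_one, Matrix.head_cons,
          Matrix.cons_val_two, Matrix.tail_cons] at hc
        have h2 : c 2 = 0 := by
          have := congrArg (B u) hc
          simpa [map_add, map_smul, smul_eq_mul, hnull, huv, huz] using this
        have h1' : c 1 = 0 := by
          have := congrArg (B v) hc
          simp only [map_add, map_smul, smul_eq_mul, hvu, map_zero, h2, zero_mul,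
            mul_zero, add_zero, zero_add] at this
          exact (mul_eq_zero.mp this).resolve_right hvv
        have h0 : c 0 = 0 := by
          rw [h1', h2, zero_smul, zero_smul, add_zero, add_zero] at hc
          exact (smul_eq_zero.mp hc).resolve_right hu
        intro i
        fin_cases i <;> assumption
      have hcard : Fintype.card (Fin 3) = Module.finrank ℝ V := by simp [hdim]
      set b := basisOfLinearIndependentOfCardEqFinrank hli hcard with hb
      have hbc : ∀ i, b i = ![u, v, z] i := fun i => by
        rw [hb, coe_basisOfLinearIndependentOfCardEqFinrank]
      have hrepr : w = b.repr w 0 • u + b.repr w 1 • v + b.repr w 2 • z := by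
        conv_lhs => rw [← b.sum_repr w]
        rw [Fin.sum_univ_three, hbc 0, hbc 1, hbc 2]
        simp [add_assoc]
      have h2 : b.repr w 2 = 0 := by
        have := congrArg (B u) hrepr.symm
        simpa [map_add, map_smul, smul_eq_mul, hnull, huv, huz, huw] using this
      have h1' : b.repr w 1 = 0 := by
        have := congrArg (B v) hrepr.symm
        simp only [map_add, map_smul, smul_eq_mul, hvu, h2, zero_mul, mul_zero,
          add_zero, zero_add, hvw] at this
        exact (mul_eq_zero.mp this).resolve_right hvv
      refine ⟨b.repr w 0, ?_⟩
      rw [h1', h2, zero_smul, zero_smul, add_zero, add_zero] at hrepr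
      exact hrepr
    · rintro ⟨c, rfl⟩ Y Z
      simp [wedgeTensor, map_smul, smul_eq_mul, hnull, hvu]
end

section
/- Let V be a 3-dimensional real vector space with a nondegenerate symmetric bilinear form ⟨·,·⟩, and let C be a nonzero Cotton-like tensor on V with 1-dimensional kernel D. If C = (u ∧ v) ⊗ u = (u' ∧ v') ⊗ u' with u, u' ∈ D nonzero, v, v' unit vectors orthogonal to D, then u' = ±u and v' − v ∈ D. -/
/-- Uniqueness in the decomposition `C = (u ∧ v) ⊗ u` of a nonzero Cotton-like
tensor with one-dimensional kernel `D`: `u` is unique up to sign and `v` is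
unique modulo `D`. -/
theorem stmt3 {V : Type*} [AddCommGroup V] [Module ℝ V] [FiniteDimensional ℝ V]
    (hdim : Module.finrank ℝ V = 3)
    (B : V →ₗ[ℝ] V →ₗ[ℝ] ℝ)
    (hBsymm : ∀ x y : V, B x y = B y x)
    (hBnondeg : ∀ x : V, (∀ y : V, B x y = 0) → x = 0)
    (C : V →ₗ[ℝ] V →ₗ[ℝ] V →ₗ[ℝ] ℝ)
    (hCne : C ≠ 0)
    (hCanti : ∀ X Y Z : V, C X Y Z = - C Y X Z)
    (hCcyc : ∀ X Y Z : V, C X Y Z + C Y Z X + C Z X Y = 0)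
    (hCtrace : ∀ (Y : V) (T : V →ₗ[ℝ] V),
      (∀ X Z : V, B (T X) Z = C X Y Z) → LinearMap.trace ℝ V T = 0)
    (u u' v v' : V)
    -- u, u' are nonzero elements of the kernel D, which is one-dimensional:
    (hu : u ≠ 0) (hu' : u' ≠ 0)
    (huD : ∀ Y Z : V, C u Y Z = 0) (hu'D : ∀ Y Z : V, C u' Y Z = 0)
    (hDdim : ∀ w : V, (∀ Y Z : V, C w Y Z = 0) → ∃ c : ℝ, w = c • u)
    -- v, v' are unit and orthogonal to D:
    (hv : B v v = 1 ∨ B v v = -1) (hv' : B v' v' = 1 ∨ B v' v' = -1)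
    (hvD : ∀ w : V, (∀ Y Z : V, C w Y Z = 0) → B w v = 0)
    (hv'D : ∀ w : V, (∀ Y Z : V, C w Y Z = 0) → B w v' = 0)
    -- the two decompositions:
    (hdec : ∀ X Y Z : V, C X Y Z = wedgeTensor B u v X Y Z)
    (hdec' : ∀ X Y Z : V, C X Y Z = wedgeTensor B u' v' X Y Z) :
    (u' = u ∨ u' = -u) ∧ ∃ c : ℝ, v' - v = c • u := by
  obtain ⟨c, hc⟩ := hDdim u' hu'D
  obtain ⟨Z0, hZ0⟩ : ∃ Z, B u Z ≠ 0 := by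
    by_contra h
    push_neg at h
    exact hu (hBnondeg u h)
  have hBu' : ∀ X, B u' X = c * B u X := by
    intro X; rw [hc, map_smul]; simp
  have key : ∀ X Y : V, B u X * B v Y - B v X * B u Y
      = c ^ 2 * (B u X * B v' Y - B v' X * B u Y) := by
    intro X Y
    have h1 := (hdec X Y Z0).symm.trans (hdec' X Y Z0)
    simp only [wedgeTensor, hBu'] at h1
    apply mul_right_cancel₀ hZ0
    linear_combination h1
  have huv : B u v = 0 := hvD u huD
  have huv' : B u v' = 0 := hv'D u huD
  have e1 : B v v = c ^ 2 * B v' v := by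
    have h := key v Z0
    rw [huv] at h
    apply mul_right_cancel₀ hZ0
    linear_combination -h
  have e2 : B v v' = c ^ 2 * B v' v' := by
    have h := key v' Z0
    rw [huv'] at h
    apply mul_right_cancel₀ hZ0
    linear_combination -h
  have h4 : B v v = c ^ 4 * B v' v' := by
    rw [e1, hBsymm v' v, e2]; ring
  have hc2 : c ^ 2 = 1 := by
    rcases hv with h | h <;> rcases hv' with h' | h' <;> rw [h, h'] at h4 <;>
      nlinarith [sq_nonneg c, sq_nonneg (c ^ 2 - 1), sq_nonneg (c ^ 2 + 1), sq_nonneg (c ^ 2)]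
  constructor
  · have hprod : (c - 1) * (c + 1) = 0 := by linear_combination hc2
    rcases mul_eq_zero.mp hprod with h | h
    · left; rw [hc, show c = 1 by linarith, one_smul]
    · right; rw [hc, show c = -1 by linarith, neg_one_smul]
  · set l := (B v Z0 - B v' Z0) / B u Z0 with hl
    have hkey2 : ∀ Y, B v Y - B v' Y = l * B u Y := by
      intro Y
      have h := key Z0 Y
      rw [hc2, one_mul] at h
      rw [hl]
      field_simp
      linear_combination h
    refine ⟨-l, ?_⟩
    have h0 : v' - v - (-l) • u = 0 := by
      apply hBnondeg
      intro y
      have hy := hkey2 y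
      simp only [map_sub, map_smul, LinearMap.sub_apply, LinearMap.smul_apply,
        smul_eq_mul, neg_smul, map_neg, LinearMap.neg_apply]
      linarith
    exact sub_eq_zero.mp h0
end

section
/- On ℝ³ with coordinates (t,s,x) equipped with the Lorentzian metric ĝ = (x³ + a(t)x) dt² + dt ds + dx², where a : ℝ → ℝ is smooth, the Ricci tensor equals −3x · dt ⊗ dt and the Cotton tensor equals 3 (dt ∧ dx) ⊗ dt; in particular, this metric is scalar-flat and, since the Cotton tensor is nowhere zero, the metric is nowhere conformally flat. -/
noncomputable section

open scoped Matrix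

/-- Coordinate partial derivative `∂_i h` on `ℝ³` (coordinates `t,s,x` are
`p 0, p 1, p 2`). -/
def pd (h : (Fin 3 → ℝ) → ℝ) (i : Fin 3) (p : Fin 3 → ℝ) : ℝ :=
  fderiv ℝ h p (Pi.single i 1)

/-- The metric `ĝ = (x³ + a(t)x) dt² + dt ds + dx²` on `ℝ³`, in coordinates
`(t,s,x) = (p 0, p 1, p 2)`; as a symmetric form, `ĝ_{ts} = ĝ_{st} = 1/2`. -/
def gmet (a : ℝ → ℝ) (p : Fin 3 → ℝ) : Matrix (Fin 3) (Fin 3) ℝ :=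
  !![(p 2) ^ 3 + a (p 0) * p 2, 1 / 2, 0; 1 / 2, 0, 0; 0, 0, 1]

/-- The inverse metric. -/
def ginv (a : ℝ → ℝ) (p : Fin 3 → ℝ) : Matrix (Fin 3) (Fin 3) ℝ :=
  (gmet a p)⁻¹

/-- Christoffel symbols `Γ^k_{ij}` of the Levi-Civita connection of `ĝ`. -/
def Gamma (a : ℝ → ℝ) (p : Fin 3 → ℝ) (k i j : Fin 3) : ℝ :=
  (1 / 2) * ∑ l : Fin 3, ginv a p k l *
    (pd (fun q => gmet a q j l) i p + pd (fun q => gmet a q i l) j p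
      - pd (fun q => gmet a q i j) l p)

/-- The Ricci tensor `R_{ij}` of `ĝ`. -/
def RicT (a : ℝ → ℝ) (p : Fin 3 → ℝ) (i j : Fin 3) : ℝ :=
  (∑ k : Fin 3, pd (fun q => Gamma a q k i j) k p)
    - (∑ k : Fin 3, pd (fun q => Gamma a q k i k) j p)
    + (∑ k : Fin 3, ∑ l : Fin 3, Gamma a p k k l * Gamma a p l i j)
    - (∑ k : Fin 3, ∑ l : Fin 3, Gamma a p k j l * Gamma a p l i k)

/-- The scalar curvature of `ĝ`. -/
def scal (a : ℝ → ℝ) (p : Fin 3 → ℝ) : ℝ :=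
  ∑ i : Fin 3, ∑ j : Fin 3, ginv a p i j * RicT a p i j

/-- The Schouten tensor `P = Ric − (s/4)·ĝ` (dimension 3). -/
def schouten (a : ℝ → ℝ) (p : Fin 3 → ℝ) (i j : Fin 3) : ℝ :=
  RicT a p i j - (scal a p / 4) * gmet a p i j

/-- The covariant derivative `∇_i P_{jk}` of the Schouten tensor. -/
def covP (a : ℝ → ℝ) (p : Fin 3 → ℝ) (i j k : Fin 3) : ℝ :=
  pd (fun q => schouten a q j k) i p
    - (∑ l : Fin 3, Gamma a p l i j * schouten a p l k)
    - (∑ l : Fin 3, Gamma a p l i k * schouten a p j l)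

/-- The Cotton tensor `C_{ijk} = ∇_i P_{jk} − ∇_j P_{ik}` of `ĝ`. -/
def cotton (a : ℝ → ℝ) (p : Fin 3 → ℝ) (i j k : Fin 3) : ℝ :=
  covP a p i j k - covP a p j i k

namespace Stmt10Aux

set_option linter.unnecessarySeqFocus false

abbrev E3 := Fin 3 → ℝ

def prj (i : Fin 3) : E3 →L[ℝ] ℝ := ContinuousLinearMap.proj i

lemma pd_eq {h : E3 → ℝ} {L : E3 →L[ℝ] ℝ} {p : E3} (H : HasFDerivAt h L p) (i : Fin 3) :
    pd h i p = L (Pi.single i 1) := by rw [pd, H.fderiv]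

@[simp] lemma pd_const (c : ℝ) (i : Fin 3) (p : E3) : pd (fun _ => c) i p = 0 := by
  simp [pd]

lemma pd_congr {f g : E3 → ℝ} (h : ∀ q, f q = g q) (i : Fin 3) (p : E3) :
    pd f i p = pd g i p := by rw [funext h]

lemma hq (i : Fin 3) (p : E3) : HasFDerivAt (fun q : E3 => q i) (prj i) p :=
  (prj i).hasFDerivAt

lemma hcomp {b : ℝ → ℝ} (hb : Differentiable ℝ b) (p : E3) :
    HasFDerivAt (fun q : E3 => b (q 0)) (deriv b (p 0) • prj 0) p :=
  HasDerivAt.comp_hasFDerivAt p ((hb (p 0)).hasDerivAt) (hq 0 p)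

lemma pdF1 {b : ℝ → ℝ} (hb : Differentiable ℝ b) (i : Fin 3) (p : E3) :
    pd (fun q => (q 2) ^ 3 + b (q 0) * q 2) i p =
      if i = 0 then deriv b (p 0) * p 2 else if i = 2 then 3 * (p 2)^2 + b (p 0) else 0 := by
  rw [show (fun q : E3 => (q 2) ^ 3 + b (q 0) * q 2)
      = fun q : E3 => q 2 * q 2 * q 2 + b (q 0) * q 2 from funext fun q => by ring]
  have H := (((hq 2 p).mul (hq 2 p)).mul (hq 2 p)).add ((hcomp hb p).mul (hq 2 p))
  rw [pd_eq (h := fun q : E3 => q 2 * q 2 * q 2 + b (q 0) * q 2) H]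
  fin_cases i <;> simp [prj, Pi.single_apply] <;> ring

lemma pdF2 {b : ℝ → ℝ} (hb : Differentiable ℝ b) (i : Fin 3) (p : E3) :
    pd (fun q => b (q 0) * q 2) i p =
      if i = 0 then deriv b (p 0) * p 2 else if i = 2 then b (p 0) else 0 := by
  have H := (hcomp hb p).mul (hq 2 p)
  rw [pd_eq (h := fun q : E3 => b (q 0) * q 2) H]
  fin_cases i <;> simp [prj, Pi.single_apply] <;> ring

lemma pdF4 {b : ℝ → ℝ} (hb : Differentiable ℝ b) (i : Fin 3) (p : E3) :
    pd (fun q => 3 * (q 2) ^ 2 + b (q 0)) i p =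
      if i = 0 then deriv b (p 0) else if i = 2 then 6 * p 2 else 0 := by
  rw [show (fun q : E3 => 3 * (q 2) ^ 2 + b (q 0))
      = fun q : E3 => 3 * (q 2 * q 2) + b (q 0) from funext fun q => by ring]
  have H := (((hq 2 p).mul (hq 2 p)).const_mul (3:ℝ)).add (hcomp hb p)
  rw [pd_eq (h := fun q : E3 => 3 * (q 2 * q 2) + b (q 0)) H]
  fin_cases i <;> simp [prj, Pi.single_apply] <;> ring

lemma pdF3 {b : ℝ → ℝ} (hb : Differentiable ℝ b) (i : Fin 3) (p : E3) :
    pd (fun q => -(3 * (q 2) ^ 2 + b (q 0)) / 2) i p =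
      if i = 0 then -(deriv b (p 0)) / 2 else if i = 2 then -3 * p 2 else 0 := by
  rw [show (fun q : E3 => -(3 * (q 2) ^ 2 + b (q 0)) / 2)
      = fun q : E3 => (3 * (q 2 * q 2) + b (q 0)) * (-1/2) from funext fun q => by ring]
  have H := ((((hq 2 p).mul (hq 2 p)).const_mul (3:ℝ)).add (hcomp hb p)).mul_const (-1/2 : ℝ)
  rw [pd_eq (h := fun q : E3 => (3 * (q 2 * q 2) + b (q 0)) * (-1/2)) H]
  fin_cases i <;> simp [prj, Pi.single_apply] <;> ring

lemma pdF5 (c : ℝ) (i : Fin 3) (p : E3) :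
    pd (fun q => c * q 2) i p = if i = 2 then c else 0 := by
  have H := (hq 2 p).const_mul c
  rw [pd_eq H]
  fin_cases i <;> simp [prj, Pi.single_apply]

lemma ginv_eq (a : ℝ → ℝ) (p : E3) :
    ginv a p = !![0, 2, 0; 2, -4 * ((p 2) ^ 3 + a (p 0) * p 2), 0; 0, 0, 1] := by
  rw [ginv]
  apply Matrix.inv_eq_right_inv
  ext i j
  fin_cases i <;> fin_cases j <;>
    simp [gmet, Matrix.mul_apply, Fin.sum_univ_three] <;> ring

/-- Closed form of the Christoffel symbols. -/
def G (a : ℝ → ℝ) (p : E3) (k i j : Fin 3) : ℝ :=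
  if k = 1 ∧ i = 0 ∧ j = 0 then deriv a (p 0) * p 2
  else if k = 2 ∧ i = 0 ∧ j = 0 then -(3 * (p 2) ^ 2 + a (p 0)) / 2
  else if k = 1 ∧ (i = 0 ∧ j = 2 ∨ i = 2 ∧ j = 0) then 3 * (p 2) ^ 2 + a (p 0)
  else 0

lemma Gamma_eq {a : ℝ → ℝ} (hb : Differentiable ℝ a) (p : E3) (k i j : Fin 3) :
    Gamma a p k i j = G a p k i j := by
  rw [Gamma, Fin.sum_univ_three, ginv_eq]
  fin_cases k <;> fin_cases i <;> fin_cases j <;>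
    simp [G, gmet, pdF1 hb] <;> ring

lemma pd_Gamma {a : ℝ → ℝ} (hb : Differentiable ℝ a) (p : E3) (l k i j : Fin 3) :
    pd (fun q => Gamma a q k i j) l p = pd (fun q => G a q k i j) l p :=
  pd_congr (fun q => Gamma_eq hb q k i j) l p

lemma RicT_eq {a : ℝ → ℝ} (hb : Differentiable ℝ a) (hb2 : Differentiable ℝ (deriv a))
    (p : E3) (i j : Fin 3) :
    RicT a p i j = if i = 0 ∧ j = 0 then -3 * p 2 else 0 := by
  rw [RicT]
  simp only [Fin.sum_univ_three, pd_Gamma hb]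
  fin_cases i <;> fin_cases j <;>
    (simp (config := { decide := true }) only [Gamma_eq hb, G, if_true, if_false]
     try simp only [pdF2 hb2, pdF3 hb, pdF4 hb, pd_const]
     try simp (config := { decide := true })
     try norm_num)

lemma scal_eq {a : ℝ → ℝ} (hb : Differentiable ℝ a) (hb2 : Differentiable ℝ (deriv a))
    (p : E3) : scal a p = 0 := by
  rw [scal]
  simp (config := { decide := true }) [Fin.sum_univ_three, ginv_eq, RicT_eq hb hb2]

lemma schouten_eq {a : ℝ → ℝ} (hb : Differentiable ℝ a) (hb2 : Differentiable ℝ (deriv a))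
    (p : E3) (i j : Fin 3) :
    schouten a p i j = if i = 0 ∧ j = 0 then -3 * p 2 else 0 := by
  rw [schouten, RicT_eq hb hb2, scal_eq hb hb2]
  ring

lemma pd_schouten {a : ℝ → ℝ} (hb : Differentiable ℝ a) (hb2 : Differentiable ℝ (deriv a))
    (p : E3) (i j k : Fin 3) :
    pd (fun q => schouten a q j k) i p
      = pd (fun q => if j = 0 ∧ k = 0 then -3 * q 2 else 0) i p :=
  pd_congr (fun q => schouten_eq hb hb2 q j k) i p

lemma covP_eq {a : ℝ → ℝ} (hb : Differentiable ℝ a) (hb2 : Differentiable ℝ (deriv a))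
    (p : E3) (i j k : Fin 3) :
    covP a p i j k = if i = 2 ∧ j = 0 ∧ k = 0 then (-3:ℝ) else 0 := by
  rw [covP, Fin.sum_univ_three, Fin.sum_univ_three, pd_schouten hb hb2]
  fin_cases i <;> fin_cases j <;> fin_cases k <;>
    (simp (config := { decide := true }) only [Gamma_eq hb, G, schouten_eq hb hb2,
      if_true, if_false]
     try simp only [pdF5, pd_const]
     try simp (config := { decide := true })
     try norm_num)

lemma cotton_eq {a : ℝ → ℝ} (hb : Differentiable ℝ a) (hb2 : Differentiable ℝ (deriv a))
    (p : E3) (i j k : Fin 3) :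
    cotton a p i j k = 3 * ((if i = 0 then (1:ℝ) else 0) * (if j = 2 then 1 else 0)
        - (if i = 2 then (1:ℝ) else 0) * (if j = 0 then 1 else 0))
        * (if k = 0 then (1:ℝ) else 0) := by
  rw [cotton, covP_eq hb hb2, covP_eq hb hb2]
  fin_cases i <;> fin_cases j <;> fin_cases k <;>
    simp (config := { decide := true }) <;> norm_num

end Stmt10Aux

open Stmt10Aux in
/-- For the Lorentzian metric `ĝ = (x³ + a(t)x) dt² + dt ds + dx²` on `ℝ³`:
the Ricci tensor is `−3x · dt ⊗ dt`, the metric is scalar-flat, the Cotton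
tensor is `3 (dt ∧ dx) ⊗ dt`, and the Cotton tensor is nowhere zero, so the
metric is nowhere conformally flat. -/
theorem stmt10 (a : ℝ → ℝ) (ha : ContDiff ℝ (⊤ : ℕ∞) a) :
    (∀ (p : Fin 3 → ℝ) (i j : Fin 3),
      RicT a p i j = if i = 0 ∧ j = 0 then -3 * p 2 else 0) ∧
    (∀ p : Fin 3 → ℝ, scal a p = 0) ∧
    (∀ (p : Fin 3 → ℝ) (i j k : Fin 3),
      cotton a p i j k = 3 * ((if i = 0 then (1:ℝ) else 0) * (if j = 2 then 1 else 0)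
        - (if i = 2 then (1:ℝ) else 0) * (if j = 0 then 1 else 0))
        * (if k = 0 then (1:ℝ) else 0)) ∧
    (∀ p : Fin 3 → ℝ, ¬ ∀ i j k : Fin 3, cotton a p i j k = 0) := by
  have hinf : ContDiff ℝ (((⊤ : ℕ∞)) : WithTop ℕ∞) a := ha.of_le (by simp)
  have hb : Differentiable ℝ a := (contDiff_infty_iff_deriv.mp hinf).1
  have hb2 : Differentiable ℝ (deriv a) :=
    (contDiff_infty_iff_deriv.mp (contDiff_infty_iff_deriv.mp hinf).2).1
  refine ⟨fun p i j => RicT_eq hb hb2 p i j, fun p => scal_eq hb hb2 p,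
    fun p i j k => cotton_eq hb hb2 p i j k, fun p h => ?_⟩
  have h3 := h 0 2 0
  rw [cotton_eq hb hb2] at h3
  simp (config := { decide := true }) at h3

end
end

section
/- Let V be a 3-dimensional real vector space with a nondegenerate symmetric bilinear form ⟨·,·⟩, and let C be a Cotton-like tensor on V. If the kernel D = {u ∈ V : C(u,·,·) = 0} contains a vector u with ⟨u,u⟩ ≠ 0, then C = 0. -/
/-!
Antisymmetry and the cyclic identity propagate `C(u,·,·) = 0` to `C(·,u,·) = 0` and
`C(·,·,u) = 0`. Completing `u` to a basis `(u, e, f)`, the form `C(X,Y,·)` is the `e ∧ f`-minor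
of `(X,Y)` times the covector `c = C(e,f,·) = ⟨w,·⟩`, so the map `T_Y` of the trace condition is
the rank-one map `X ↦ (X ∧ Y) w`, whose trace is `w ∧ Y`. Tracelessness for all `Y` puts `w` on
the line `ℝu`, and then `⟨w,u⟩ = c(u) = 0` with `⟨u,u⟩ ≠ 0` gives `w = 0`.
-/

open Module

section Alternating

variable {R V M : Type*} [CommRing R] [AddCommGroup V] [Module R V] [AddCommGroup M] [Module R M]

theorem Module.Basis.eq_sum_fin_three (b : Basis (Fin 3) R V) (x : V) :
    x = b.repr x 0 • b 0 + b.repr x 1 • b 1 + b.repr x 2 • b 2 := by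
  rw [← Fin.sum_univ_three (fun i => b.repr x i • b i), b.sum_repr]

theorem LinearMap.flip_eq_smulRight_of_basis_zero (b : Basis (Fin 3) R V)
    (F : V →ₗ[R] V →ₗ[R] M) (hF : ∀ x, F x x = 0) (h0 : F (b 0) = 0) (Y : V) :
    F.flip Y = (b.repr Y 2 • b.coord 1 - b.repr Y 1 • b.coord 2).smulRight (F (b 1) (b 2)) := by
  have hanti : ∀ x y, F y x = - F x y := fun x y => by
    have := hF (x + y)
    simp only [map_add, LinearMap.add_apply, hF, zero_add, add_zero] at this
    exact eq_neg_of_add_eq_zero_left this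
  have h0' : ∀ x, F x (b 0) = 0 := fun x => by rw [hanti, h0, LinearMap.zero_apply, neg_zero]
  ext X
  conv_lhs => rw [LinearMap.flip_apply, b.eq_sum_fin_three X, b.eq_sum_fin_three Y]
  simp only [map_add, map_smul, LinearMap.add_apply, LinearMap.smul_apply, h0, h0', hF,
    hanti (b 1) (b 2), LinearMap.smulRight_apply, LinearMap.sub_apply, Basis.coord_apply,
    LinearMap.zero_apply, smul_zero]
  module

end Alternating

theorem exists_basis_fin_three_zero_eq {K V : Type*} [Field K] [AddCommGroup V] [Module K V]
    [FiniteDimensional K V] (hdim : finrank K V = 3) {u : V} (hu : u ≠ 0) :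
    ∃ b : Basis (Fin 3) K V, b 0 = u := by
  obtain ⟨y, hy⟩ := exists_linearIndependent_pair_of_one_lt_finrank (R := K) (by omega) hu
  obtain ⟨z, hz⟩ := exists_linearIndependent_snoc_of_lt_finrank hy (by omega)
  exact ⟨basisOfLinearIndependentOfCardEqFinrank hz (by simp [hdim]), by simp⟩

theorem exists_apply_eq_of_left_nondegenerate {K V : Type*} [Field K] [AddCommGroup V]
    [Module K V] [FiniteDimensional K V] {B : V →ₗ[K] V →ₗ[K] K}
    (hB : ∀ x : V, (∀ y : V, B x y = 0) → x = 0) (c : Dual K V) : ∃ w, B w = c := by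
  have hinj : Function.Injective B := (injective_iff_map_eq_zero B).mpr fun x hx =>
    hB x fun y => by rw [hx, LinearMap.zero_apply]
  exact (LinearMap.injective_iff_surjective_of_finrank_eq_finrank
    Subspace.dual_finrank_eq.symm).mp hinj c

theorem apply_apply_eq_zero_of_forall_apply_eq_zero {R V : Type*} [CommRing R] [AddCommGroup V]
    [Module R V] {C : V →ₗ[R] V →ₗ[R] V →ₗ[R] R}
    (hCanti : ∀ X Y Z : V, C X Y Z = - C Y X Z)
    (hCcyc : ∀ X Y Z : V, C X Y Z + C Y Z X + C Z X Y = 0)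
    {u : V} (hu : ∀ Y Z : V, C u Y Z = 0) (X Y : V) : C X Y u = 0 := by
  have := hCcyc X Y u
  rw [hu, hCanti Y u, hu] at this
  simpa using this

theorem stmt11_general {V : Type*} [AddCommGroup V] [Module ℝ V] [FiniteDimensional ℝ V]
    (hdim : Module.finrank ℝ V = 3)
    (B : V →ₗ[ℝ] V →ₗ[ℝ] ℝ)
    (hBnondeg : ∀ x : V, (∀ y : V, B x y = 0) → x = 0)
    (C : V →ₗ[ℝ] V →ₗ[ℝ] V →ₗ[ℝ] ℝ)
    (hCanti : ∀ X Y Z : V, C X Y Z = - C Y X Z)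
    (hCcyc : ∀ X Y Z : V, C X Y Z + C Y Z X + C Z X Y = 0)
    (hCtrace : ∀ (Y : V) (T : V →ₗ[ℝ] V),
      (∀ X Z : V, B (T X) Z = C X Y Z) → LinearMap.trace ℝ V T = 0)
    (u : V) (hu : ∀ Y Z : V, C u Y Z = 0) (hnonnull : B u u ≠ 0) :
    C = 0 := by
  obtain ⟨b, rfl⟩ := exists_basis_fin_three_zero_eq hdim (u := u) (by rintro rfl; simp at hnonnull)
  set c := C (b 1) (b 2)
  obtain ⟨w, hw⟩ := exists_apply_eq_of_left_nondegenerate hBnondeg c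
  have hC : ∀ Y, C.flip Y = (b.repr Y 2 • b.coord 1 - b.repr Y 1 • b.coord 2).smulRight c :=
    C.flip_eq_smulRight_of_basis_zero b
      (fun x => by ext Z; rw [LinearMap.zero_apply]; linarith [hCanti x x Z])
      (by ext Y Z; exact hu Y Z)
  have htrace : ∀ Y, b.repr Y 2 * b.repr w 1 - b.repr Y 1 * b.repr w 2 = 0 := fun Y => by
    have := hCtrace Y ((b.repr Y 2 • b.coord 1 - b.repr Y 1 • b.coord 2).smulRight w)
      fun X Z => by simp [← LinearMap.flip_apply (m := X), hC, hw]
    simpa [LinearMap.trace_smulRight] using this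
  have hw1 : b.repr w 1 = 0 := by simpa using htrace (b 2)
  have hw2 : b.repr w 2 = 0 := by simpa using htrace (b 1)
  have hw0 : w = b.repr w 0 • b 0 := by simpa [hw1, hw2] using b.eq_sum_fin_three w
  have hc0 : c (b 0) = 0 := apply_apply_eq_zero_of_forall_apply_eq_zero hCanti hCcyc hu _ _
  have hc : c = 0 := by
    rw [← hw, hw0, map_smul, LinearMap.smul_apply, smul_eq_mul] at hc0
    rw [← hw, hw0, (mul_eq_zero.mp hc0).resolve_right hnonnull, zero_smul, map_zero]
  ext X Y Z
  simp [← LinearMap.flip_apply (m := X), hC, hc]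

/-- If the kernel of a Cotton-like tensor on a 3-dimensional pseudo-Euclidean
space contains a non-null vector, then the tensor vanishes. -/
theorem stmt11 {V : Type*} [AddCommGroup V] [Module ℝ V] [FiniteDimensional ℝ V]
    (hdim : Module.finrank ℝ V = 3)
    (B : V →ₗ[ℝ] V →ₗ[ℝ] ℝ)
    (hBsymm : ∀ x y : V, B x y = B y x)
    (hBnondeg : ∀ x : V, (∀ y : V, B x y = 0) → x = 0)
    (C : V →ₗ[ℝ] V →ₗ[ℝ] V →ₗ[ℝ] ℝ)
    (hCanti : ∀ X Y Z : V, C X Y Z = - C Y X Z)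
    (hCcyc : ∀ X Y Z : V, C X Y Z + C Y Z X + C Z X Y = 0)
    (hCtrace : ∀ (Y : V) (T : V →ₗ[ℝ] V),
      (∀ X Z : V, B (T X) Z = C X Y Z) → LinearMap.trace ℝ V T = 0)
    (u : V) (hu : ∀ Y Z : V, C u Y Z = 0) (hnonnull : B u u ≠ 0) :
    C = 0 :=
  stmt11_general hdim B hBnondeg C hCanti hCcyc hCtrace u hu hnonnull
end

section
/- If ⟨·,·⟩ is a positive-definite (or negative-definite) inner product on a 3-dimensional real vector space V, then every Cotton-like tensor C on V whose kernel D = {u : C(u,·,·)=0} is nonzero must vanish identically; equivalently, a nonzero Cotton-like tensor on a definite 3-dimensional space has trivial kernel. -/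
/-!
Let `u ≠ 0` lie in the kernel; since `B` is definite, `B u u ≠ 0`. Antisymmetry and the
cyclic identity put `u` in the kernel of every slot of `C`, so in a `B`-orthogonal basis
`(u, e₁, e₂)` the only possibly nonzero components are `C(e₁, e₂, ·)` and `C(e₂, e₁, ·)`.
In such a basis the trace condition for `Y` reads `∑ᵢ C(eᵢ, Y, eᵢ) / B(eᵢ, eᵢ) = 0`; for `Y = e₁`
and `Y = e₂` a single term survives, giving `C(e₂, e₁, e₂) = C(e₁, e₂, e₁) = 0`, and together with
`C(e₁, e₂, u) = 0` this forces `C = 0`.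
-/

open Module LinearMap

section

variable {K V : Type*} [Field K] [AddCommGroup V] [Module K V]

/-- In `traceFree`, `T` is `C(·, Y, ·)` with its last argument raised by `B`, so its trace is the
`B`-contraction of the first and third arguments. -/
structure IsCottonLike (B : LinearMap.BilinForm K V) (C : V →ₗ[K] V →ₗ[K] V →ₗ[K] K) :
    Prop where
  anti : ∀ X Y Z, C X Y Z = -C Y X Z
  cyclic : ∀ X Y Z, C X Y Z + C Y Z X + C Z X Y = 0
  traceFree : ∀ (Y : V) (T : V →ₗ[K] V), (∀ X Z, B (T X) Z = C X Y Z) → trace K V T = 0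

namespace LinearMap.BilinForm

variable {ι : Type*} {B : LinearMap.BilinForm K V} {b : Basis ι K V}

theorem iIsOrtho.repr_apply (hO : B.iIsOrtho b) {i : ι} (hi : B (b i) (b i) ≠ 0) (x : V) :
    b.repr x i = B x (b i) / B (b i) (b i) := by
  have hflip : B.flip (b i) = B (b i) (b i) • b.coord i := b.ext fun j => by
    rcases eq_or_ne j i with rfl | hji
    · simp
    · simp [hO hji, Finsupp.single_eq_of_ne hji.symm]
  rw [eq_div_iff hi, mul_comm]
  simpa using (LinearMap.congr_fun hflip x).symm

theorem iIsOrtho.trace_eq_sum [Fintype ι] (hO : B.iIsOrtho b) (hd : ∀ i, B (b i) (b i) ≠ 0)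
    (T : V →ₗ[K] V) : trace K V T = ∑ i, B (T (b i)) (b i) / B (b i) (b i) := by
  classical
  simp only [trace_eq_matrix_trace K b, Matrix.trace, Matrix.diag, LinearMap.toMatrix_apply,
    hO.repr_apply (hd _)]

theorem exists_iIsOrtho_basis_fin_cons [Invertible (2 : K)] [FiniteDimensional K V] {n : ℕ}
    (hdim : finrank K V = n + 1) (hB : LinearMap.IsSymm B) {x : V} (hx : B x x ≠ 0) :
    ∃ b : Basis (Fin (n + 1)) K V, b 0 = x ∧ B.iIsOrtho b := by
  have hW : finrank K (B.orthogonal (K ∙ x)) = n := by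
    have := Submodule.finrank_add_eq_of_isCompl (isCompl_span_singleton_orthogonal hx)
    rw [finrank_span_singleton (ne_zero_of_map hx)] at this
    omega
  set W := B.orthogonal (K ∙ x)
  have hxW : ∀ y ∈ W, B x y = 0 := fun y hy =>
    mem_orthogonal_iff.1 hy x (Submodule.mem_span_singleton_self x)
  obtain ⟨v, hv⟩ := exists_orthogonal_basis (hB.domRestrict W)
  refine ⟨Basis.mkFinCons x (v.reindex (finCongr hW)) ?_ ?_,
    by rw [Basis.coe_mkFinCons]; rfl, ?_⟩
  · intro c y hy hcy
    have hBx := congr_arg (B x) hcy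
    simp only [map_add, map_smul, smul_eq_mul, hxW y hy, add_zero, map_zero] at hBx
    exact (mul_eq_zero.1 hBx).resolve_right hx
  · intro z
    refine ⟨-(B x z / B x x), mem_orthogonal_iff.2 fun y hy => ?_⟩
    obtain ⟨a, rfl⟩ := Submodule.mem_span_singleton.1 hy
    simp [div_mul_cancel₀ _ hx]
  · rw [Basis.coe_mkFinCons]
    intro i j hij
    induction i using Fin.cases <;> induction j using Fin.cases
    · exact absurd rfl hij
    · exact hxW _ (Subtype.prop _)
    · exact hB.isRefl _ _ (hxW _ (Subtype.prop _))
    · simp only [Function.onFun, Fin.cons_succ, Function.comp_apply, Basis.reindex_apply]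
      exact hv ((finCongr hW).symm.injective.ne (Fin.succ_injective _ |>.ne_iff.1 hij))

theorem nondegenerate_of_apply_self_ne_zero (hB : LinearMap.IsRefl B)
    (h : ∀ x, x ≠ 0 → B x x ≠ 0) : B.Nondegenerate :=
  hB.nondegenerate_iff_separatingLeft.2 fun x hx => by_contra fun hx0 => h x hx0 (hx x)

end LinearMap.BilinForm

namespace IsCottonLike

variable {B : LinearMap.BilinForm K V} {C : V →ₗ[K] V →ₗ[K] V →ₗ[K] K} (hC : IsCottonLike B C)
include hC

theorem apply_self_left [Invertible (2 : K)] (X Z : V) : C X X Z = 0 := by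
  have h2 : (2 : K) * C X X Z = 0 := by linear_combination hC.anti X X Z
  exact (mul_eq_zero.1 h2).resolve_left (Invertible.ne_zero 2)

section Kernel

variable {u : V} (hu : ∀ Y Z, C u Y Z = 0)
include hu

theorem apply_mid_eq_zero_of_ker (X Z : V) : C X u Z = 0 := by
  rw [hC.anti, hu, neg_zero]

theorem apply_right_eq_zero_of_ker (X Y : V) : C X Y u = 0 := by
  linear_combination hC.cyclic X Y u - hC.apply_mid_eq_zero_of_ker hu Y X - hu X Y

end Kernel

theorem sum_apply_div_eq_zero {ι : Type*} [Fintype ι] {b : Basis ι K V} (hO : B.iIsOrtho b)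
    (hd : ∀ i, B (b i) (b i) ≠ 0) (Y : V) : ∑ i, C (b i) Y (b i) / B (b i) (b i) = 0 := by
  have : FiniteDimensional K V := .of_basis b
  have hB : B.Nondegenerate := hO.nondegenerate_of_not_isOrtho_basis_self b hd
  let T : V →ₗ[K] V := (B.toDual hB).symm.toLinearMap ∘ₗ C.flip Y
  have hT : ∀ X Z, B (T X) Z = C X Y Z := fun X Z => by
    rw [← LinearMap.BilinForm.toDual_def hB]
    simp [T]
  rw [← hC.traceFree Y T hT, hO.trace_eq_sum hd]
  simp only [hT]

theorem eq_zero_of_basis_zero_mem_ker [Invertible (2 : K)] {b : Basis (Fin 3) K V}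
    (hO : B.iIsOrtho b) (hd : ∀ i, B (b i) (b i) ≠ 0) (hu : ∀ Y Z, C (b 0) Y Z = 0) :
    C = 0 := by
  -- in the trace sum for `Y = b j` (`j = 1, 2`) only the term `i = 3 - j` survives
  have h212 : C (b 2) (b 1) (b 2) = 0 := by
    simpa [Fin.sum_univ_three, hu, hC.apply_self_left, hd 2] using
      hC.sum_apply_div_eq_zero hO hd (b 1)
  have h121 : C (b 1) (b 2) (b 1) = 0 := by
    simpa [Fin.sum_univ_three, hu, hC.apply_self_left, hd 1] using
      hC.sum_apply_div_eq_zero hO hd (b 2)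
  have h12 : C (b 1) (b 2) = 0 := b.ext fun k => by
    fin_cases k
    · exact hC.apply_right_eq_zero_of_ker hu _ _
    · exact h121
    · simp [hC.anti (b 1), h212]
  refine b.ext fun i => b.ext fun j => LinearMap.ext fun Z => ?_
  fin_cases i <;> fin_cases j <;>
    simp [hu, hC.apply_mid_eq_zero_of_ker hu, hC.apply_self_left, h12, hC.anti (b 2) (b 1) Z]

theorem eq_zero_of_mem_ker [Invertible (2 : K)] [FiniteDimensional K V]
    (hdim : finrank K V = 3) (hB : LinearMap.IsSymm B) (hBnd : B.Nondegenerate) {u : V}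
    (hu : ∀ Y Z, C u Y Z = 0) (huu : B u u ≠ 0) : C = 0 := by
  obtain ⟨b, rfl, hO⟩ := LinearMap.BilinForm.exists_iIsOrtho_basis_fin_cons hdim hB huu
  exact hC.eq_zero_of_basis_zero_mem_ker hO (hO.not_isOrtho_basis_self_of_nondegenerate hBnd) hu

end IsCottonLike

end

/-- On a definite 3-dimensional space, every Cotton-like tensor with nonzero
kernel vanishes identically; equivalently, a nonzero Cotton-like tensor on a
definite 3-dimensional space has trivial kernel. -/
theorem stmt12 {V : Type*} [AddCommGroup V] [Module ℝ V] [FiniteDimensional ℝ V]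
    (hdim : Module.finrank ℝ V = 3)
    (B : V →ₗ[ℝ] V →ₗ[ℝ] ℝ)
    (hBsymm : ∀ x y : V, B x y = B y x)
    -- B is positive definite or negative definite:
    (hBdef : (∀ x : V, x ≠ 0 → 0 < B x x) ∨ (∀ x : V, x ≠ 0 → B x x < 0))
    (C : V →ₗ[ℝ] V →ₗ[ℝ] V →ₗ[ℝ] ℝ)
    (hCanti : ∀ X Y Z : V, C X Y Z = - C Y X Z)
    (hCcyc : ∀ X Y Z : V, C X Y Z + C Y Z X + C Z X Y = 0)
    (hCtrace : ∀ (Y : V) (T : V →ₗ[ℝ] V),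
      (∀ X Z : V, B (T X) Z = C X Y Z) → LinearMap.trace ℝ V T = 0)
    -- the kernel D is nonzero:
    (hker : ∃ u : V, u ≠ 0 ∧ ∀ Y Z : V, C u Y Z = 0) :
    C = 0 := by
  obtain ⟨u, hu0, hu⟩ := hker
  have hB : LinearMap.IsSymm B := ⟨hBsymm⟩
  have hBaniso : ∀ x : V, x ≠ 0 → B x x ≠ 0 := by
    rcases hBdef with h | h
    exacts [fun x hx => (h x hx).ne', fun x hx => (h x hx).ne]
  have hBnd := LinearMap.BilinForm.nondegenerate_of_apply_self_ne_zero hB.isRefl hBaniso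
  exact IsCottonLike.eq_zero_of_mem_ker ⟨hCanti, hCcyc, hCtrace⟩ hdim hB hBnd hu (hBaniso u hu0)
end

section
/- Let C be a nonzero Cotton-like tensor on a 3-dimensional pseudo-Euclidean space (V,⟨·,·⟩). Then the kernel D = {u ∈ V : C(u,·,·) = 0} is a totally isotropic subspace of V, and hence dim D ≤ 1. -/
/-!
By antisymmetry `C` also vanishes when its second argument lies in the kernel `D`, so it
descends to an alternating form in its first two arguments on `V ⧸ D`; since `C ≠ 0`,
`dim (V ⧸ D) ≥ 2`, i.e. `dim D ≤ 1`. By the cyclic identity `C` also vanishes when its third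
argument lies in `D`.

For nullity, complete `u ∈ D \ {0}` to a basis `u, e₁, e₂` and put `f = C(e₁, e₂, ·) ≠ 0`.
Then `C(X, e₂, ·) = e¹(X) f` and `C(X, e₁, ·) = -e²(X) f`, so the trace-free endomorphisms
attached to `e₂` and `e₁` are `e¹ ⊗ f♯` and `-e² ⊗ f♯`, whose traces are `e¹(f♯)` and
`-e²(f♯)`, where `⟨f♯, ·⟩ = f`. Hence `f♯` is a nonzero multiple of `u`, and
`⟨f♯, u⟩ = f(u) = 0` gives `⟨u, u⟩ = 0`.
-/

open Module LinearMap

theorem LinearMap.SeparatingLeft.surjective {𝕜 V : Type*} [Field 𝕜] [AddCommGroup V]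
    [Module 𝕜 V] [FiniteDimensional 𝕜 V] {B : V →ₗ[𝕜] V →ₗ[𝕜] 𝕜} (hB : B.SeparatingLeft) :
    Function.Surjective B :=
  (injective_iff_surjective_of_finrank_eq_finrank (K := 𝕜) (V₂ := Dual 𝕜 V)
    Subspace.dual_finrank_eq.symm).mp (ker_eq_bot.mp (separatingLeft_iff_ker_eq_bot.mp hB))

theorem LinearMap.apply_eq_zero_of_finrank_le_one {𝕜 V : Type*} [Field 𝕜] [AddCommGroup V]
    [Module 𝕜 V] [FiniteDimensional 𝕜 V] {B : V →ₗ[𝕜] V →ₗ[𝕜] 𝕜} {W : Submodule 𝕜 V}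
    (hW : finrank 𝕜 W ≤ 1) (hnull : ∀ w ∈ W, B w w = 0) {w w' : V} (hw : w ∈ W)
    (hw' : w' ∈ W) : B w w' = 0 := by
  obtain ⟨v, hv⟩ := finrank_le_one_iff.mp hW
  obtain ⟨c, rfl⟩ : ∃ c : 𝕜, c • (v : V) = w :=
    (hv ⟨w, hw⟩).imp fun c hc => congrArg Subtype.val hc
  obtain ⟨c', rfl⟩ : ∃ c' : 𝕜, c' • (v : V) = w' :=
    (hv ⟨w', hw'⟩).imp fun c hc => congrArg Subtype.val hc
  simp [hnull v v.2]

theorem Module.exists_basis_fin_three_apply_zero {𝕜 V : Type*} [Field 𝕜] [AddCommGroup V]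
    [Module 𝕜 V] (h : finrank 𝕜 V = 3) {u : V} (hu : u ≠ 0) :
    ∃ b : Basis (Fin 3) 𝕜 V, b 0 = u := by
  have : FiniteDimensional 𝕜 V := Module.finite_of_finrank_eq_succ h
  obtain ⟨e₁, hli₂⟩ := exists_linearIndependent_pair_of_one_lt_finrank (R := 𝕜) (by omega) hu
  obtain ⟨e₂, hli₃⟩ := exists_linearIndependent_snoc_of_lt_finrank hli₂ (by omega)
  exact ⟨basisOfLinearIndependentOfCardEqFinrank hli₃ (by simp [h]),
    by rw [coe_basisOfLinearIndependentOfCardEqFinrank]; rfl⟩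

namespace CottonLike

variable {𝕜 V : Type*} [Field 𝕜] [AddCommGroup V] [Module 𝕜 V]
  {C : V →ₗ[𝕜] V →ₗ[𝕜] V →ₗ[𝕜] 𝕜}

theorem apply_self_eq_zero [CharZero 𝕜] (hanti : ∀ X Y Z : V, C X Y Z = - C Y X Z) (X : V) :
    C X X = 0 :=
  LinearMap.ext fun Z => self_eq_neg.mp (hanti X X Z)

theorem apply_eq_zero_of_mem_ker (hanti : ∀ X Y Z : V, C X Y Z = - C Y X Z) {u : V}
    (hu : u ∈ ker C) (X : V) : C X u = 0 :=
  LinearMap.ext fun Z => by simp [hanti X u Z, mem_ker.mp hu]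

theorem apply_apply_eq_zero_of_mem_ker (hanti : ∀ X Y Z : V, C X Y Z = - C Y X Z)
    (hcyc : ∀ X Y Z : V, C X Y Z + C Y Z X + C Z X Y = 0) {u : V} (hu : u ∈ ker C)
    (X Y : V) : C X Y u = 0 := by
  simpa [mem_ker.mp hu, apply_eq_zero_of_mem_ker hanti hu] using hcyc X Y u

theorem apply_eq_zero_of_smul_add_smul_mem_ker [CharZero 𝕜]
    (hanti : ∀ X Y Z : V, C X Y Z = - C Y X Z) {X Y : V} {s t : 𝕜}
    (h : s • X + t • Y ∈ ker C) (hst : s ≠ 0 ∨ t ≠ 0) : C X Y = 0 := by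
  rcases hst with hs | ht
  · have : s • C X Y = 0 := by
      simpa [apply_self_eq_zero hanti] using congrArg (fun L => L Y) (mem_ker.mp h)
    exact (smul_eq_zero.mp this).resolve_left hs
  · have : t • C X Y = 0 := by
      simpa [apply_self_eq_zero hanti] using apply_eq_zero_of_mem_ker hanti h X
    exact (smul_eq_zero.mp this).resolve_left ht

theorem eq_zero_of_finrank_quotient_ker_le_one [CharZero 𝕜] [FiniteDimensional 𝕜 V]
    (hanti : ∀ X Y Z : V, C X Y Z = - C Y X Z) (h : finrank 𝕜 (V ⧸ ker C) ≤ 1) : C = 0 := by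
  refine LinearMap.ext fun X => LinearMap.ext fun Y => ?_
  have hdep : ¬ LinearIndependent 𝕜 ![(ker C).mkQ X, (ker C).mkQ Y] := fun hli => by
    simpa using hli.fintype_card_le_finrank.trans h
  obtain ⟨s, t, hst, hne⟩ : ∃ s t : 𝕜, s • (ker C).mkQ X + t • (ker C).mkQ Y = 0 ∧
      (s ≠ 0 ∨ t ≠ 0) := by
    simpa [LinearIndependent.pair_iff, or_iff_not_imp_left] using hdep
  refine apply_eq_zero_of_smul_add_smul_mem_ker hanti ?_ hne
  rwa [← Submodule.Quotient.mk_eq_zero, Submodule.Quotient.mk_add, Submodule.Quotient.mk_smul,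
    Submodule.Quotient.mk_smul]

theorem finrank_ker_add_two_le [CharZero 𝕜] [FiniteDimensional 𝕜 V]
    (hanti : ∀ X Y Z : V, C X Y Z = - C Y X Z) (hC : C ≠ 0) :
    finrank 𝕜 (ker C) + 2 ≤ finrank 𝕜 V := by
  have := (ker C).finrank_quotient_add_finrank
  have := mt (eq_zero_of_finrank_quotient_ker_le_one hanti) hC
  omega

theorem apply_eq_zero_of_flip_eq_smulRight [FiniteDimensional 𝕜 V] {B : V →ₗ[𝕜] V →ₗ[𝕜] 𝕜}
    (htrace : ∀ (Y : V) (T : V →ₗ[𝕜] V),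
      (∀ X Z : V, B (T X) Z = C X Y Z) → trace 𝕜 V T = 0)
    {Y v : V} {φ : V →ₗ[𝕜] 𝕜} (hY : C.flip Y = φ.smulRight (B v)) : φ v = 0 := by
  rw [← trace_smulRight]
  refine htrace Y _ fun X Z => ?_
  simp [← flip_apply C, hY]

section Basis

variable (b : Basis (Fin 3) 𝕜 V)

theorem flip_basis_two_eq [CharZero 𝕜] (hanti : ∀ X Y Z : V, C X Y Z = - C Y X Z)
    (hb : b 0 ∈ ker C) : C.flip (b 2) = (b.coord 1).smulRight (C (b 1) (b 2)) :=
  b.ext fun i => by fin_cases i <;> simp [mem_ker.mp hb, apply_self_eq_zero hanti]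

theorem flip_basis_one_eq [CharZero 𝕜] (hanti : ∀ X Y Z : V, C X Y Z = - C Y X Z)
    (hb : b 0 ∈ ker C) : C.flip (b 1) = (-b.coord 2).smulRight (C (b 1) (b 2)) :=
  b.ext fun i => by
    fin_cases i <;> simp [mem_ker.mp hb, apply_self_eq_zero hanti]
    ext Z; simp [hanti (b 2) (b 1) Z]

theorem apply_basis_one_basis_two_ne_zero [CharZero 𝕜]
    (hanti : ∀ X Y Z : V, C X Y Z = - C Y X Z) (hb : b 0 ∈ ker C) (hC : C ≠ 0) :
    C (b 1) (b 2) ≠ 0 := by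
  intro h
  have hflip : C.flip = 0 := b.ext fun i => by
    fin_cases i
    · simpa using LinearMap.ext fun X => apply_eq_zero_of_mem_ker hanti hb X
    · simp [flip_basis_one_eq b hanti hb, h]
    · simp [flip_basis_two_eq b hanti hb, h]
  exact hC (flip_inj hflip)

theorem apply_basis_zero_basis_zero_eq_zero [CharZero 𝕜] [FiniteDimensional 𝕜 V]
    {B : V →ₗ[𝕜] V →ₗ[𝕜] 𝕜} (hB : B.SeparatingLeft) (hC : C ≠ 0)
    (hanti : ∀ X Y Z : V, C X Y Z = - C Y X Z)
    (hcyc : ∀ X Y Z : V, C X Y Z + C Y Z X + C Z X Y = 0)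
    (htrace : ∀ (Y : V) (T : V →ₗ[𝕜] V),
      (∀ X Z : V, B (T X) Z = C X Y Z) → trace 𝕜 V T = 0)
    (hb : b 0 ∈ ker C) : B (b 0) (b 0) = 0 := by
  obtain ⟨v, hv⟩ := hB.surjective (C (b 1) (b 2))
  have h₁ : b.coord 1 v = 0 :=
    apply_eq_zero_of_flip_eq_smulRight htrace (hv ▸ flip_basis_two_eq b hanti hb)
  have h₂ : b.coord 2 v = 0 := by
    simpa only [LinearMap.neg_apply, neg_eq_zero] using
      apply_eq_zero_of_flip_eq_smulRight (φ := -b.coord 2) htrace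
        (hv ▸ flip_basis_one_eq b hanti hb)
  have hv₀ : v = b.coord 0 v • b 0 := by
    have := (b.sum_repr v).symm
    rw [Fin.sum_univ_three] at this
    simpa only [← b.coord_apply, h₁, h₂, zero_smul, add_zero] using this
  have hc : b.coord 0 v ≠ 0 := fun h =>
    apply_basis_one_basis_two_ne_zero b hanti hb hC (by rw [← hv, hv₀, h, zero_smul, map_zero])
  have : b.coord 0 v * B (b 0) (b 0) = 0 :=
    calc b.coord 0 v * B (b 0) (b 0) = B v (b 0) := by rw [hv₀]; simp
      _ = 0 := by rw [hv]; exact apply_apply_eq_zero_of_mem_ker hanti hcyc hb _ _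
  exact (mul_eq_zero.mp this).resolve_left hc

end Basis

theorem apply_self_eq_zero_of_mem_ker [CharZero 𝕜] [FiniteDimensional 𝕜 V]
    (hdim : finrank 𝕜 V = 3) {B : V →ₗ[𝕜] V →ₗ[𝕜] 𝕜} (hB : B.SeparatingLeft) (hC : C ≠ 0)
    (hanti : ∀ X Y Z : V, C X Y Z = - C Y X Z)
    (hcyc : ∀ X Y Z : V, C X Y Z + C Y Z X + C Z X Y = 0)
    (htrace : ∀ (Y : V) (T : V →ₗ[𝕜] V),
      (∀ X Z : V, B (T X) Z = C X Y Z) → trace 𝕜 V T = 0)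
    {u : V} (hu : u ∈ ker C) : B u u = 0 := by
  rcases eq_or_ne u 0 with rfl | hu₀
  · simp
  obtain ⟨b, rfl⟩ := exists_basis_fin_three_apply_zero hdim hu₀
  exact apply_basis_zero_basis_zero_eq_zero b hB hC hanti hcyc htrace hu

end CottonLike

theorem stmt14_general {V : Type*} [AddCommGroup V] [Module ℝ V] [FiniteDimensional ℝ V]
    (hdim : Module.finrank ℝ V = 3)
    (B : V →ₗ[ℝ] V →ₗ[ℝ] ℝ)
    (hBnondeg : ∀ x : V, (∀ y : V, B x y = 0) → x = 0)
    (C : V →ₗ[ℝ] V →ₗ[ℝ] V →ₗ[ℝ] ℝ)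
    (hCne : C ≠ 0)
    (hCanti : ∀ X Y Z : V, C X Y Z = - C Y X Z)
    (hCcyc : ∀ X Y Z : V, C X Y Z + C Y Z X + C Z X Y = 0)
    (hCtrace : ∀ (Y : V) (T : V →ₗ[ℝ] V),
      (∀ X Z : V, B (T X) Z = C X Y Z) → LinearMap.trace ℝ V T = 0) :
    (∀ w ∈ LinearMap.ker C, ∀ w' ∈ LinearMap.ker C, B w w' = 0) ∧
      Module.finrank ℝ (LinearMap.ker C) ≤ 1 := by
  have hD : finrank ℝ (ker C) ≤ 1 := by
    have := CottonLike.finrank_ker_add_two_le hCanti hCne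
    omega
  have hnull : ∀ u ∈ ker C, B u u = 0 := fun u hu =>
    CottonLike.apply_self_eq_zero_of_mem_ker hdim hBnondeg hCne hCanti hCcyc hCtrace hu
  exact ⟨fun w hw w' hw' => apply_eq_zero_of_finrank_le_one hD hnull hw hw', hD⟩

/-- The kernel `D = {u : C(u,·,·) = 0}` of a nonzero Cotton-like tensor on a
3-dimensional pseudo-Euclidean space is totally isotropic, and hence has
dimension at most 1. -/
theorem stmt14 {V : Type*} [AddCommGroup V] [Module ℝ V] [FiniteDimensional ℝ V]
    (hdim : Module.finrank ℝ V = 3)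
    (B : V →ₗ[ℝ] V →ₗ[ℝ] ℝ)
    (hBsymm : ∀ x y : V, B x y = B y x)
    (hBnondeg : ∀ x : V, (∀ y : V, B x y = 0) → x = 0)
    (C : V →ₗ[ℝ] V →ₗ[ℝ] V →ₗ[ℝ] ℝ)
    (hCne : C ≠ 0)
    (hCanti : ∀ X Y Z : V, C X Y Z = - C Y X Z)
    (hCcyc : ∀ X Y Z : V, C X Y Z + C Y Z X + C Z X Y = 0)
    (hCtrace : ∀ (Y : V) (T : V →ₗ[ℝ] V),
      (∀ X Z : V, B (T X) Z = C X Y Z) → LinearMap.trace ℝ V T = 0) :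
    (∀ w ∈ LinearMap.ker C, ∀ w' ∈ LinearMap.ker C, B w w' = 0) ∧
      Module.finrank ℝ (LinearMap.ker C) ≤ 1 :=
  stmt14_general hdim B hBnondeg C hCne hCanti hCcyc hCtrace
end
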